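/- arXiv:2203.04506 — 2 statements merged into one kernel-verified Lean document; each statement's English description precedes it below -/
import Mathlib

section
/- (Splitting Lemma) For simple valuations ζ = Σ_{b∈B} r_b η_b and ξ = Σ_{c∈C} s_c η_c on a T0 space X, ζ ≤ ξ pointwise on open sets if and only if there exist nonnegative reals t_{b,c} (b∈B, c∈C) with Σ_{c∈C} t_{b,c} = r_b for all b, Σ_{b∈B} t_{b,c} ≤ s_c for all c, and t_{b,c} ≠ 0 implies b ⊑ c in the specialization order. -/
open Set

/-- The specialization order on a topological space: `x ⊑ y` iff `x ∈ closure {y}`. -/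
def sOrd (X : Type*) [TopologicalSpace X] (x y : X) : Prop := x ∈ closure {y}

/-- A directed subset `D`, viewed as a net indexed by itself, converges to `x`:
it is eventually in every open neighborhood of `x`. -/
def dconv (X : Type*) [TopologicalSpace X] (D : Set X) (x : X) : Prop :=
  D.Nonempty ∧ DirectedOn (sOrd X) D ∧
    ∀ U : Set X, IsOpen U → x ∈ U → ∃ d ∈ D, ∀ e ∈ D, sOrd X d e → e ∈ U

/-- A subset `U` is directed open if every directed net converging to a point of `U`
meets `U`. -/
def dOpen (X : Type*) [TopologicalSpace X] (U : Set X) : Prop :=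
  ∀ D x, dconv X D x → x ∈ U → (D ∩ U).Nonempty

open scoped ENNReal
open Classical in
/-- The point valuation `η_x`: `η_x U = 1` if `x ∈ U`, else `0`. -/
noncomputable def pv {X : Type*} (x : X) (U : Set X) : ℝ≥0∞ :=
  if x ∈ U then 1 else 0

open Classical in
/-- The simple valuation `Σ_{b ∈ B} r b · η_b`. -/
noncomputable def simpleVal {X : Type*} (B : Finset X) (r : X → ℝ≥0∞) (U : Set X) : ℝ≥0∞ :=
  ∑ b ∈ B, if b ∈ U then r b else 0

/-!
If `ζ ≤ ξ` on open sets, then Hall's condition `r(A) ≤ s(N(A))` holds for every `A ⊆ B`, where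
`N(A)` is the set of `c ∈ C` lying above some point of `A`: the complement of the down-closure of
`C \ N(A)` is open, contains `A` and meets `C` only inside `N(A)`. Conversely, a plan `t` only moves
the mass of `b` to points `c ⊒ b`, which lie in every open neighbourhood of `b`, so `ζ ≤ ξ`.

The heart of the matter is the supply–demand theorem that Hall's condition yields such a plan. It is
proved by induction on `|B| + |C|`. A nonempty proper tight set `A`, with `r(A) = s(N(A))`, splits
the problem into `A` against `N(A)` and `B \ A` against the rest of `C`. Otherwise all proper
subsets have slack, so some amount `δ > 0` can be sent along an edge `b₀ ⊑ c₀`; taking `δ` maximal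
either exhausts `b₀` or `c₀`, which can then be removed, or creates a tight set.
-/

open Finset

section Transport

variable {α β : Type*}

open scoped Classical in
noncomputable def relNeighbors (R : α → β → Prop) (C : Finset β) (A : Finset α) : Finset β :=
  {c ∈ C | ∃ b ∈ A, R b c}

section Neighbors

variable {R : α → β → Prop} {C : Finset β} {A A' : Finset α}

@[simp]
lemma mem_relNeighbors {c : β} : c ∈ relNeighbors R C A ↔ c ∈ C ∧ ∃ b ∈ A, R b c := by
  simp [relNeighbors]

lemma relNeighbors_subset : relNeighbors R C A ⊆ C := fun _ hc => (mem_relNeighbors.1 hc).1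

lemma relNeighbors_mono (h : A ⊆ A') : relNeighbors R C A ⊆ relNeighbors R C A' := by
  intro c
  simp only [mem_relNeighbors]
  exact fun ⟨hc, b, hb, hbc⟩ => ⟨hc, b, h hb, hbc⟩

lemma relNeighbors_union [DecidableEq α] [DecidableEq β] :
    relNeighbors R C (A ∪ A') = relNeighbors R C A ∪ relNeighbors R C A' := by
  ext c
  simp only [mem_relNeighbors, Finset.mem_union, or_and_right, exists_or, and_or_left]

lemma relNeighbors_erase [DecidableEq β] (c₀ : β) :
    relNeighbors R (C.erase c₀) A = (relNeighbors R C A).erase c₀ := by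
  ext c
  simp only [mem_relNeighbors, mem_erase, and_assoc]

lemma Finset.Nonempty.of_mem_relNeighbors {c : β} (h : c ∈ relNeighbors R C A) : A.Nonempty :=
  let ⟨_, b, hb, _⟩ := mem_relNeighbors.1 h
  ⟨b, hb⟩

end Neighbors

structure HallCondition (R : α → β → Prop) (B : Finset α) (C : Finset β)
    (r : α → ℝ) (s : β → ℝ) : Prop where
  nonneg_left : ∀ b ∈ B, 0 ≤ r b
  nonneg_right : ∀ c ∈ C, 0 ≤ s c
  sum_le : ∀ A ⊆ B, ∑ b ∈ A, r b ≤ ∑ c ∈ relNeighbors R C A, s c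

structure IsTransportPlan (R : α → β → Prop) (B : Finset α) (C : Finset β)
    (r : α → ℝ) (s : β → ℝ) (t : α → β → ℝ) : Prop where
  nonneg : ∀ b c, 0 ≤ t b c
  rel_of_ne_zero : ∀ b c, t b c ≠ 0 → b ∈ B ∧ c ∈ C ∧ R b c
  sum_row : ∀ b ∈ B, ∑ c ∈ C, t b c = r b
  sum_col_le : ∀ c ∈ C, ∑ b ∈ B, t b c ≤ s c

namespace IsTransportPlan

variable {R : α → β → Prop} {B B' : Finset α} {C C' : Finset β} {r : α → ℝ} {s s' : β → ℝ}
  {t t' : α → β → ℝ}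

lemma zero (hr : ∀ b ∈ B, r b = 0) (hs : ∀ c ∈ C, 0 ≤ s c) : IsTransportPlan R B C r s 0 where
  nonneg _ _ := le_rfl
  rel_of_ne_zero _ _ h := absurd rfl h
  sum_row b hb := by simp [hr b hb]
  sum_col_le c hc := by simpa using hs c hc

lemma eq_zero_of_notMem_left (ht : IsTransportPlan R B C r s t) {b : α} (hb : b ∉ B) (c : β) :
    t b c = 0 := by
  by_contra h
  exact hb (ht.rel_of_ne_zero b c h).1

lemma eq_zero_of_notMem_right (ht : IsTransportPlan R B C r s t) (b : α) {c : β} (hc : c ∉ C) :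
    t b c = 0 := by
  by_contra h
  exact hc (ht.rel_of_ne_zero b c h).2.1

lemma mono (ht : IsTransportPlan R B' C' r s t) (hB : B' ⊆ B) (hC : C' ⊆ C)
    (hr : ∀ b ∈ B, b ∉ B' → r b = 0) (hs : ∀ c ∈ C, c ∉ C' → 0 ≤ s c) :
    IsTransportPlan R B C r s t where
  nonneg := ht.nonneg
  rel_of_ne_zero b c h :=
    let ⟨hb, hc, hbc⟩ := ht.rel_of_ne_zero b c h
    ⟨hB hb, hC hc, hbc⟩
  sum_row b hb := by
    by_cases hb' : b ∈ B'
    · rw [← ht.sum_row b hb']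
      exact (sum_subset hC fun c _ hc => ht.eq_zero_of_notMem_right b hc).symm
    · simp [ht.eq_zero_of_notMem_left hb', hr b hb hb']
  sum_col_le c hc := by
    by_cases hc' : c ∈ C'
    · rw [← sum_subset hB fun b _ hb => ht.eq_zero_of_notMem_left hb c]
      exact ht.sum_col_le c hc'
    · simpa [ht.eq_zero_of_notMem_right _ hc'] using hs c hc hc'

lemma add_of_disjoint [DecidableEq α] (ht : IsTransportPlan R B C r s t)
    (ht' : IsTransportPlan R B' C r s' t') (hBB' : Disjoint B B') :
    IsTransportPlan R (B ∪ B') C r (s + s') (t + t') where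
  nonneg b c := add_nonneg (ht.nonneg b c) (ht'.nonneg b c)
  rel_of_ne_zero b c h := by
    by_cases hb : t b c = 0
    · obtain ⟨hb, hc, hbc⟩ := ht'.rel_of_ne_zero b c (by simpa [hb] using h)
      exact ⟨mem_union_right _ hb, hc, hbc⟩
    · obtain ⟨hb, hc, hbc⟩ := ht.rel_of_ne_zero b c hb
      exact ⟨mem_union_left _ hb, hc, hbc⟩
  sum_row b hb := by
    simp only [Pi.add_apply, sum_add_distrib]
    rcases mem_union.1 hb with hb | hb
    · simp [ht.sum_row b hb, ht'.eq_zero_of_notMem_left (disjoint_left.1 hBB' hb)]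
    · simp [ht'.sum_row b hb, ht.eq_zero_of_notMem_left (disjoint_right.1 hBB' hb)]
  sum_col_le c hc := by
    have hB : ∑ b ∈ B, (t + t') b c = ∑ b ∈ B, t b c := sum_congr rfl fun b hb => by
      simp [ht'.eq_zero_of_notMem_left (disjoint_left.1 hBB' hb)]
    have hB' : ∑ b ∈ B', (t + t') b c = ∑ b ∈ B', t' b c := sum_congr rfl fun b hb => by
      simp [ht.eq_zero_of_notMem_left (disjoint_right.1 hBB' hb)]
    rw [sum_union hBB', hB, hB']
    exact add_le_add (ht.sum_col_le c hc) (ht'.sum_col_le c hc)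

lemma add_single [DecidableEq α] [DecidableEq β] {b₀ : α} {c₀ : β} {δ : ℝ}
    (ht : IsTransportPlan R B C (r - Pi.single b₀ δ) (s - Pi.single c₀ δ) t)
    (hb₀ : b₀ ∈ B) (hc₀ : c₀ ∈ C) (hrel : R b₀ c₀) (hδ : 0 ≤ δ) :
    IsTransportPlan R B C r s (t + fun b c => if b = b₀ ∧ c = c₀ then δ else 0) where
  nonneg b c := add_nonneg (ht.nonneg b c) (by dsimp only; split_ifs <;> simp [hδ])
  rel_of_ne_zero b c h := by
    by_cases hbc : b = b₀ ∧ c = c₀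
    · obtain ⟨rfl, rfl⟩ := hbc
      exact ⟨hb₀, hc₀, hrel⟩
    · refine ht.rel_of_ne_zero b c ?_
      simpa [hbc] using h
  sum_row b hb := by
    have := ht.sum_row b hb
    simp only [Pi.add_apply, sum_add_distrib, Pi.sub_apply] at this ⊢
    rcases eq_or_ne b b₀ with rfl | hb
    · simp [hc₀, this]
    · simp [hb, this]
  sum_col_le c hc := by
    have := ht.sum_col_le c hc
    simp only [Pi.add_apply, sum_add_distrib, Pi.sub_apply] at this ⊢
    rcases eq_or_ne c c₀ with rfl | hc
    · simp only [Pi.single_eq_same] at this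
      simp only [and_true, sum_ite_eq', hb₀, if_true]
      linarith
    · simpa [hc] using this

end IsTransportPlan

namespace HallCondition

variable {R : α → β → Prop} {B : Finset α} {C : Finset β} {r : α → ℝ} {s : β → ℝ}

lemma subset (h : HallCondition R B C r s) {B' : Finset α} (hB : B' ⊆ B) :
    HallCondition R B' C r s where
  nonneg_left b hb := h.nonneg_left b (hB hb)
  nonneg_right := h.nonneg_right
  sum_le A hA := h.sum_le A (hA.trans hB)

lemma erase_right [DecidableEq β] (h : HallCondition R B C r s) {c₀ : β} (hc₀ : s c₀ = 0) :
    HallCondition R B (C.erase c₀) r s where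
  nonneg_left := h.nonneg_left
  nonneg_right c hc := h.nonneg_right c (mem_of_mem_erase hc)
  sum_le A hA := by
    rw [relNeighbors_erase, sum_erase _ hc₀]
    exact h.sum_le A hA

lemma indicator_relNeighbors (h : HallCondition R B C r s) {A : Finset α} (hA : A ⊆ B) :
    HallCondition R A C r ((relNeighbors R C A : Set β).indicator s) where
  nonneg_left b hb := h.nonneg_left b (hA hb)
  nonneg_right c hc := Set.indicator_nonneg (fun _ _ => h.nonneg_right c hc) c
  sum_le A' hA' := by
    rw [sum_congr rfl fun c hc => Set.indicator_of_mem (relNeighbors_mono hA' hc) s]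
    exact h.sum_le A' (hA'.trans hA)

lemma indicator_compl_relNeighbors [DecidableEq α] [DecidableEq β] (h : HallCondition R B C r s)
    {A : Finset α} (hA : A ⊆ B) (htight : ∑ b ∈ A, r b = ∑ c ∈ relNeighbors R C A, s c) :
    HallCondition R (B \ A) C r ((relNeighbors R C A : Set β)ᶜ.indicator s) where
  nonneg_left b hb := h.nonneg_left b (mem_sdiff.1 hb).1
  nonneg_right c hc := Set.indicator_nonneg (fun _ _ => h.nonneg_right c hc) c
  sum_le A' hA' := by
    have hunion := h.sum_le (A ∪ A') (union_subset hA (hA'.trans sdiff_subset))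
    rw [sum_union (disjoint_of_subset_right hA' disjoint_sdiff), relNeighbors_union,
      ← sum_sdiff subset_union_left, Finset.union_sdiff_left, htight] at hunion
    have hsum : ∑ c ∈ relNeighbors R C A', (relNeighbors R C A : Set β)ᶜ.indicator s c =
        ∑ c ∈ relNeighbors R C A' \ relNeighbors R C A, s c := by
      rw [sdiff_eq_filter, sum_filter]
      refine sum_congr rfl fun c _ => ?_
      by_cases hc : c ∈ relNeighbors R C A <;> simp [hc]
    linarith

lemma exists_rel_pos (h : HallCondition R B C r s) {b₀ : α} (hb₀ : b₀ ∈ B) (hr : 0 < r b₀) :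
    ∃ c₀ ∈ C, R b₀ c₀ ∧ 0 < s c₀ := by
  have hle := h.sum_le {b₀} (singleton_subset_iff.2 hb₀)
  rw [sum_singleton] at hle
  obtain ⟨c, hc, hsc⟩ :=
    exists_lt_of_sum_lt (f := fun _ => (0 : ℝ)) (by simpa using hr.trans_le hle)
  obtain ⟨hcC, b, hb, hbc⟩ := mem_relNeighbors.1 hc
  rw [mem_singleton.1 hb] at hbc
  exact ⟨c, hcC, hbc, hsc⟩

lemma sub_single [DecidableEq α] [DecidableEq β] (h : HallCondition R B C r s) {b₀ : α} {c₀ : β}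
    {δ : ℝ} (hc₀ : c₀ ∈ C) (hrel : R b₀ c₀) (hδr : δ ≤ r b₀) (hδs : δ ≤ s c₀)
    (hslack : ∀ A ⊆ B, b₀ ∉ A → c₀ ∈ relNeighbors R C A →
      δ ≤ ∑ c ∈ relNeighbors R C A, s c - ∑ b ∈ A, r b) :
    HallCondition R B C (r - Pi.single b₀ δ) (s - Pi.single c₀ δ) where
  nonneg_left b hb := by
    rcases eq_or_ne b b₀ with rfl | hb' <;> simp [*, h.nonneg_left b hb]
  nonneg_right c hc := by
    rcases eq_or_ne c c₀ with rfl | hc' <;> simp [*, h.nonneg_right c hc]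
  sum_le A hA := by
    have hle := h.sum_le A hA
    simp only [Pi.sub_apply, sum_sub_distrib, sum_pi_single']
    by_cases hb₀A : b₀ ∈ A
    · have hc₀A : c₀ ∈ relNeighbors R C A := mem_relNeighbors.2 ⟨hc₀, b₀, hb₀A, hrel⟩
      simpa [hb₀A, hc₀A] using hle
    · by_cases hc₀A : c₀ ∈ relNeighbors R C A
      · have := hslack A hA hb₀A hc₀A
        simp only [hb₀A, hc₀A, if_true, if_false]
        linarith
      · simpa [hb₀A, hc₀A] using hle

lemma exists_isTransportPlan_of_tight [DecidableEq α] [DecidableEq β]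
    (h : HallCondition R B C r s)
    {A : Finset α} (hAB : A ⊆ B) (hA : A.Nonempty) (hAB' : A ≠ B)
    (htight : ∑ b ∈ A, r b = ∑ c ∈ relNeighbors R C A, s c)
    (ih : ∀ B' ⊂ B, ∀ s' : β → ℝ, HallCondition R B' C r s' →
      ∃ t, IsTransportPlan R B' C r s' t) :
    ∃ t, IsTransportPlan R B C r s t := by
  obtain ⟨t₁, ht₁⟩ := ih A (hAB.ssubset_of_ne hAB') _ (h.indicator_relNeighbors hAB)
  obtain ⟨t₂, ht₂⟩ := ih (B \ A) (sdiff_ssubset hAB hA) _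
    (h.indicator_compl_relNeighbors hAB htight)
  have ht := ht₁.add_of_disjoint ht₂ disjoint_sdiff
  rw [union_sdiff_of_subset hAB, Set.indicator_self_add_compl] at ht
  exact ⟨_, ht⟩

lemma exists_isTransportPlan_of_forall_lt [DecidableEq α] [DecidableEq β]
    (h : HallCondition R B C r s)
    (hlt : ∀ A ⊆ B, A.Nonempty → A ≠ B → ∑ b ∈ A, r b < ∑ c ∈ relNeighbors R C A, s c)
    (ih : ∀ (B' : Finset α) (C' : Finset β) (r' : α → ℝ) (s' : β → ℝ),
      #B' + #C' < #B + #C → HallCondition R B' C' r' s' → ∃ t, IsTransportPlan R B' C' r' s' t) :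
    ∃ t, IsTransportPlan R B C r s t := by
  by_cases hpos : ∃ b₀ ∈ B, 0 < r b₀
  swap
  · push Not at hpos
    exact ⟨0, .zero (fun b hb => (hpos b hb).antisymm (h.nonneg_left b hb)) h.nonneg_right⟩
  obtain ⟨b₀, hb₀, hrb₀⟩ := hpos
  obtain ⟨c₀, hc₀, hrel, hsc₀⟩ := h.exists_rel_pos hb₀ hrb₀
  set slack : Finset α → ℝ := fun A => ∑ c ∈ relNeighbors R C A, s c - ∑ b ∈ A, r b
  set S := {A ∈ B.powerset | b₀ ∉ A ∧ c₀ ∈ relNeighbors R C A}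
  have hS : ∀ A ∈ S, A ⊆ B ∧ b₀ ∉ A ∧ c₀ ∈ relNeighbors R C A := by simp [S]
  have hS_ne : ∀ A ∈ S, A.Nonempty ∧ A ≠ B := fun A hA =>
    ⟨.of_mem_relNeighbors (hS A hA).2.2, fun hAB => (hS A hA).2.1 (hAB ▸ hb₀)⟩
  -- the largest amount that can be moved from `b₀` to `c₀` without violating Hall's condition
  set D := insert (r b₀) (insert (s c₀) (S.image slack))
  have hD : ∀ x ∈ D, 0 < x := by
    intro x hx
    simp only [D, Finset.mem_insert, Finset.mem_image] at hx
    rcases hx with rfl | rfl | ⟨A, hA, rfl⟩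
    · exact hrb₀
    · exact hsc₀
    · exact sub_pos.2 (hlt A (hS A hA).1 (hS_ne A hA).1 (hS_ne A hA).2)
  obtain ⟨δ, hδD, hδle⟩ : ∃ δ ∈ D, ∀ x ∈ D, δ ≤ x := D.exists_min_image id (insert_nonempty _ _)
  have hδpos := hD δ hδD
  have h' := h.sub_single hc₀ hrel (hδle _ (mem_insert_self _ _))
    (hδle _ (mem_insert_of_mem (mem_insert_self _ _))) fun A hAB hb₀A hc₀A =>
      hδle _ (mem_insert_of_mem (mem_insert_of_mem (mem_image_of_mem _
        (by simp [S, hAB, hb₀A, hc₀A]))))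
  suffices ∃ t, IsTransportPlan R B C (r - Pi.single b₀ δ) (s - Pi.single c₀ δ) t from
    let ⟨t, ht⟩ := this
    ⟨_, ht.add_single hb₀ hc₀ hrel hδpos.le⟩
  simp only [D, Finset.mem_insert, Finset.mem_image] at hδD
  rcases hδD with hδ | hδ | ⟨A, hA, hδ⟩
  · obtain ⟨t, ht⟩ := ih (B.erase b₀) C _ _ (by have := card_erase_lt_of_mem hb₀; omega)
      (h'.subset (erase_subset _ _))
    refine ⟨t, ht.mono (erase_subset _ _) subset_rfl (fun b hb hb' => ?_) fun c hc hc' => ?_⟩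
    · obtain rfl : b = b₀ := by_contra fun hne => hb' (mem_erase.2 ⟨hne, hb⟩)
      simp [hδ]
    · exact absurd hc hc'
  · obtain ⟨t, ht⟩ := ih B (C.erase c₀) _ _ (by have := card_erase_lt_of_mem hc₀; omega)
      (h'.erase_right (by simp [hδ]))
    exact ⟨t, ht.mono subset_rfl (erase_subset _ _) (fun b hb hb' => absurd hb hb')
      fun c hc _ => h'.nonneg_right c hc⟩
  obtain ⟨hAB, hb₀A, hc₀A⟩ := hS A hA
  refine h'.exists_isTransportPlan_of_tight hAB (hS_ne A hA).1 (hS_ne A hA).2 ?_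
    fun B' hB' s' h'' => ih B' C _ s' (by have := Finset.card_lt_card hB'; omega) h''
  simp only [Pi.sub_apply, sum_sub_distrib, sum_pi_single', hb₀A, hc₀A, if_true, if_false]
  linarith [show slack A = δ from hδ]

end HallCondition

theorem HallCondition.exists_isTransportPlan {R : α → β → Prop} {B : Finset α} {C : Finset β}
    {r : α → ℝ} {s : β → ℝ} (h : HallCondition R B C r s) : ∃ t, IsTransportPlan R B C r s t := by
  classical
  induction hn : #B + #C using Nat.strong_induction_on generalizing B C r s with
  | _ n ih =>
  have ih' : ∀ (B' : Finset α) (C' : Finset β) (r' : α → ℝ) (s' : β → ℝ), #B' + #C' < #B + #C →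
      HallCondition R B' C' r' s' → ∃ t, IsTransportPlan R B' C' r' s' t :=
    fun B' C' r' s' hlt h' => ih _ (hn ▸ hlt) h' rfl
  by_cases htight : ∃ A ⊆ B, A.Nonempty ∧ A ≠ B ∧ ∑ b ∈ A, r b = ∑ c ∈ relNeighbors R C A, s c
  · obtain ⟨A, hAB, hA, hAB', htight⟩ := htight
    exact h.exists_isTransportPlan_of_tight hAB hA hAB' htight fun B' hB' s' h' =>
      ih' B' C r s' (by have := Finset.card_lt_card hB'; omega) h'
  · exact h.exists_isTransportPlan_of_forall_lt (fun A hAB hA hAB' => (h.sum_le A hAB).lt_of_ne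
      fun heq => htight ⟨A, hAB, hA, hAB', heq⟩) ih'

end Transport

open scoped Classical in
lemma simpleVal_eq_sum_filter {X : Type*} (B : Finset X) (r : X → ℝ≥0∞) (U : Set X) :
    simpleVal B r U = ∑ b ∈ B with b ∈ U, r b :=
  (sum_filter _ _).symm

section SimpleValuation

variable {X : Type*} [TopologicalSpace X] {B C : Finset X} {r s : X → ℝ≥0∞}

lemma sOrd_iff_specializes {x y : X} : sOrd X x y ↔ y ⤳ x := specializes_iff_mem_closure.symm

lemma exists_isOpen_separating_relNeighbors (A C : Finset X) :
    ∃ U : Set X, IsOpen U ∧ (∀ b ∈ A, b ∈ U) ∧ ∀ c ∈ C, c ∈ U → c ∈ relNeighbors (sOrd X) C A := by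
  classical
  refine ⟨(⋃ c ∈ C \ relNeighbors (sOrd X) C A, closure {c})ᶜ,
    (isClosed_biUnion_finset fun _ _ => isClosed_closure).isOpen_compl, ?_, ?_⟩ <;>
    simp only [Set.mem_compl_iff, Set.mem_iUnion, not_exists]
  · exact fun b hb c hc hbc =>
      (mem_sdiff.1 hc).2 (mem_relNeighbors.2 ⟨(mem_sdiff.1 hc).1, b, hb, hbc⟩)
  · exact fun c hc hcU => by_contra fun hcA => hcU c (mem_sdiff.2 ⟨hc, hcA⟩) (subset_closure rfl)

lemma sum_le_sum_relNeighbors_of_simpleVal_le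
    (h : ∀ U : Set X, IsOpen U → simpleVal B r U ≤ simpleVal C s U) {A : Finset X} (hA : A ⊆ B) :
    ∑ b ∈ A, r b ≤ ∑ c ∈ relNeighbors (sOrd X) C A, s c := by
  classical
  obtain ⟨U, hU, hAU, hCU⟩ := exists_isOpen_separating_relNeighbors A C
  calc ∑ b ∈ A, r b ≤ simpleVal B r U := by
        rw [simpleVal_eq_sum_filter]
        exact sum_le_sum_of_subset fun b hb => mem_filter.2 ⟨hA hb, hAU b hb⟩
    _ ≤ simpleVal C s U := h U hU
    _ ≤ ∑ c ∈ relNeighbors (sOrd X) C A, s c := by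
        rw [simpleVal_eq_sum_filter]
        exact sum_le_sum_of_subset fun c hc => hCU c (mem_filter.1 hc).1 (mem_filter.1 hc).2

lemma hallCondition_of_simpleVal_le
    (h : ∀ U : Set X, IsOpen U → simpleVal B r U ≤ simpleVal C s U)
    (hr : ∀ b ∈ B, r b ≠ ⊤) (hs : ∀ c ∈ C, s c ≠ ⊤) :
    HallCondition (sOrd X) B C (fun b => (r b).toReal) (fun c => (s c).toReal) where
  nonneg_left _ _ := ENNReal.toReal_nonneg
  nonneg_right _ _ := ENNReal.toReal_nonneg
  sum_le A hA := by
    have hs' : ∀ c ∈ relNeighbors (sOrd X) C A, s c ≠ ⊤ := fun c hc => hs c (relNeighbors_subset hc)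
    rw [← ENNReal.toReal_sum fun b hb => hr b (hA hb), ← ENNReal.toReal_sum hs']
    exact ENNReal.toReal_mono (ENNReal.sum_ne_top.2 hs')
      (sum_le_sum_relNeighbors_of_simpleVal_le h hA)

lemma simpleVal_le_of_transport {t : X → X → ℝ≥0∞} (hrow : ∀ b ∈ B, ∑ c ∈ C, t b c = r b)
    (hcol : ∀ c ∈ C, ∑ b ∈ B, t b c ≤ s c) (hrel : ∀ b ∈ B, ∀ c ∈ C, t b c ≠ 0 → sOrd X b c)
    {U : Set X} (hU : IsOpen U) : simpleVal B r U ≤ simpleVal C s U := by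
  classical
  calc simpleVal B r U = ∑ b ∈ B, ∑ c ∈ C, if b ∈ U then t b c else 0 :=
        sum_congr rfl fun b hb => by split_ifs <;> simp [hrow b hb]
    _ ≤ ∑ b ∈ B, ∑ c ∈ C, if c ∈ U then t b c else 0 := by
        refine sum_le_sum fun b hb => sum_le_sum fun c hc => ?_
        by_cases hbU : b ∈ U
        · by_cases htbc : t b c = 0
          · simp [htbc]
          · have hcU := (sOrd_iff_specializes.1 (hrel b hb c hc htbc)).mem_open hU hbU
            simp [hbU, hcU]
        · simp [hbU]
    _ = ∑ c ∈ C, if c ∈ U then ∑ b ∈ B, t b c else 0 := by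
        rw [sum_comm]
        exact sum_congr rfl fun c _ => by split_ifs <;> simp
    _ ≤ simpleVal C s U := sum_le_sum fun c hc => by
        split_ifs
        exacts [hcol c hc, le_rfl]

end SimpleValuation

theorem stmt_10_general {X : Type*} [TopologicalSpace X]
    (B C : Finset X) (r s : X → ℝ≥0∞)
    (hr : ∀ b ∈ B, 0 < r b ∧ r b ≠ ⊤) (hs : ∀ c ∈ C, 0 < s c ∧ s c ≠ ⊤) :
    (∀ U : Set X, IsOpen U → simpleVal B r U ≤ simpleVal C s U) ↔
      ∃ t : X → X → ℝ≥0∞,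
        (∀ b ∈ B, ∀ c ∈ C, t b c ≠ ⊤) ∧
        (∀ b ∈ B, ∑ c ∈ C, t b c = r b) ∧
        (∀ c ∈ C, ∑ b ∈ B, t b c ≤ s c) ∧
        (∀ b ∈ B, ∀ c ∈ C, t b c ≠ 0 → sOrd X b c) := by
  refine ⟨fun h => ?_, fun ⟨t, _, hrow, hcol, hrel⟩ U hU =>
    simpleVal_le_of_transport hrow hcol hrel hU⟩
  obtain ⟨t, ht⟩ := (hallCondition_of_simpleVal_le h (fun b hb => (hr b hb).2)
    fun c hc => (hs c hc).2).exists_isTransportPlan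
  refine ⟨fun b c => ENNReal.ofReal (t b c), fun _ _ _ _ => ENNReal.ofReal_ne_top,
    fun b hb => ?_, fun c hc => ?_, fun b _ c _ hne => ?_⟩
  · rw [← ENNReal.ofReal_sum_of_nonneg fun c _ => ht.nonneg b c, ht.sum_row b hb,
      ENNReal.ofReal_toReal (hr b hb).2]
  · rw [← ENNReal.ofReal_sum_of_nonneg fun b _ => ht.nonneg b c]
    exact ENNReal.ofReal_le_of_le_toReal (ht.sum_col_le c hc)
  · exact (ht.rel_of_ne_zero b c fun h0 => hne (by simp [h0])).2.2

/-- Splitting Lemma: For simple valuations `ζ = Σ_{b∈B} r_b η_b` and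
`ξ = Σ_{c∈C} s_c η_c` on a T0 space `X`, `ζ ≤ ξ` pointwise on open sets iff there is
a matrix `t_{b,c}` of nonnegative (finite) reals with `Σ_c t_{b,c} = r_b`,
`Σ_b t_{b,c} ≤ s_c`, and `t_{b,c} ≠ 0 → b ⊑ c` in the specialization order. -/
theorem stmt_10 {X : Type*} [TopologicalSpace X] [T0Space X]
    (B C : Finset X) (r s : X → ℝ≥0∞)
    (hr : ∀ b ∈ B, 0 < r b ∧ r b ≠ ⊤) (hs : ∀ c ∈ C, 0 < s c ∧ s c ≠ ⊤) :
    (∀ U : Set X, IsOpen U → simpleVal B r U ≤ simpleVal C s U) ↔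
      ∃ t : X → X → ℝ≥0∞,
        (∀ b ∈ B, ∀ c ∈ C, t b c ≠ ⊤) ∧
        (∀ b ∈ B, ∑ c ∈ C, t b c = r b) ∧
        (∀ c ∈ C, ∑ b ∈ B, t b c ≤ s c) ∧
        (∀ b ∈ B, ∀ c ∈ C, t b c ≠ 0 → sOrd X b c) :=
  stmt_10_general B C r s hr hs
end

section
/- For a continuous domain X with the Scott topology, if a directed family 𝔇 of simple valuations satisfies 𝔇 ⇒_P ξ, then ξ ≤ sup 𝔇 in the pointwise order on valuations. -/
/-! Given `c < 1`, choose for each support point `b ∈ U` of `ξ` an element of `D b` lying in the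
open set `U`; the net `D b → b` provides one. Shrinking every coefficient by the factor `c`, the
`⇒_P` condition yields a member of `𝔇` dominating the moved valuation, whose value on `U` is at
least `c * ξ U`. Letting `c → 1` gives `ξ U ≤ sup 𝔇 U`. -/

open Set

open scoped ENNReal
/-- The pointwise order on valuations, comparing values on open sets. -/
def svLe {X : Type*} [TopologicalSpace X] (ξ η : Set X → ℝ≥0∞) : Prop :=
  ∀ U : Set X, IsOpen U → ξ U ≤ η U

/-- The set `SV(X)` of simple valuations on `X`. -/
def SVset (X : Type*) [TopologicalSpace X] : Set (Set X → ℝ≥0∞) :=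
  {ξ | ∃ (B : Finset X) (r : X → ℝ≥0∞),
    (∀ b ∈ B, 0 < r b ∧ r b ≠ ⊤) ∧ ξ = fun U => simpleVal B r U}

open Classical in
/-- The simple valuation `Σ_{b ∈ B} r' b · η_{d b}` obtained by moving each support
point `b` to `d b` and shrinking coefficients to `r' b`. -/
noncomputable def shiftVal {X : Type*} (B : Finset X) (d : X → X) (r' : X → ℝ≥0∞)
    (U : Set X) : ℝ≥0∞ :=
  ∑ b ∈ B, if d b ∈ U then r' b else 0

/-- The convergence relation `𝔇 ⇒_P ξ` on simple valuations: `𝔇` is a directed family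
of simple valuations, `ξ = Σ_{b∈B} r_b η_b`, there are directed sets `D_b → b` in `X`,
and for every choice `d b ∈ D b` and every `r' b < r b` some member of `𝔇` dominates
`Σ_{b∈B} r'_b η_{d b}`. -/
def PConv {X : Type*} [TopologicalSpace X] (𝔇 : Set (Set X → ℝ≥0∞))
    (ξ : Set X → ℝ≥0∞) : Prop :=
  𝔇 ⊆ SVset X ∧ 𝔇.Nonempty ∧ DirectedOn svLe 𝔇 ∧
    ∃ (B : Finset X) (r : X → ℝ≥0∞),
      (∀ b ∈ B, 0 < r b ∧ r b ≠ ⊤) ∧ (ξ = fun U => simpleVal B r U) ∧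
      ∃ D : X → Set X, (∀ b ∈ B, dconv X (D b) b) ∧
        ∀ d : X → X, (∀ b ∈ B, d b ∈ D b) →
          ∀ r' : X → ℝ≥0∞, (∀ b ∈ B, r' b < r b) →
            ∃ ξ' ∈ 𝔇, svLe (shiftVal B d r') ξ'

/-- `⇒_P`-convergence open subsets of `SV(X)`. -/
def POpen {X : Type*} [TopologicalSpace X] (𝔘 : Set (Set X → ℝ≥0∞)) : Prop :=
  𝔘 ⊆ SVset X ∧ ∀ 𝔇 ξ, PConv 𝔇 ξ → ξ ∈ 𝔘 → (𝔇 ∩ 𝔘).Nonempty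

/-- The way-below relation on a poset: `a ≪ x` iff every directed set whose least
upper bound dominates `x` contains an element above `a`. -/
def wayBelow {X : Type*} [PartialOrder X] (a x : X) : Prop :=
  ∀ D : Set X, D.Nonempty → DirectedOn (· ≤ ·) D →
    ∀ y : X, IsLUB D y → x ≤ y → ∃ d ∈ D, a ≤ d

theorem dconv.exists_mem_imp_mem {X : Type*} [TopologicalSpace X] {D : Set X} {x : X}
    (hD : dconv X D x) {U : Set X} (hU : IsOpen U) : ∃ d ∈ D, x ∈ U → d ∈ U := by
  by_cases hxU : x ∈ U
  · obtain ⟨d, hd, hdU⟩ := hD.2.2 U hU hxU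
    exact ⟨d, hd, fun _ => hdU d hd (subset_closure rfl)⟩
  · obtain ⟨d, hd⟩ := hD.1
    exact ⟨d, hd, fun hx => absurd hx hxU⟩

theorem const_mul_simpleVal {X : Type*} (B : Finset X) (r : X → ℝ≥0∞) (c : ℝ≥0∞)
    (U : Set X) : c * simpleVal B r U = simpleVal B (fun b => c * r b) U := by
  simp only [simpleVal, Finset.mul_sum, mul_ite, mul_zero]

theorem simpleVal_le_shiftVal {X : Type*} {B : Finset X} {d : X → X} {U : Set X}
    (hdU : ∀ b ∈ B, b ∈ U → d b ∈ U) (r : X → ℝ≥0∞) :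
    simpleVal B r U ≤ shiftVal B d r U := by
  refine Finset.sum_le_sum fun b hb => ?_
  by_cases hbU : b ∈ U
  · simp [hbU, hdU b hb hbU]
  · simp [hbU]

theorem PConv.exists_const_mul_le {X : Type*} [TopologicalSpace X]
    {𝔇 : Set (Set X → ℝ≥0∞)} {ξ : Set X → ℝ≥0∞} (h : PConv 𝔇 ξ) {U : Set X} (hU : IsOpen U)
    {c : ℝ≥0∞} (hc : c < 1) : ∃ ξ' ∈ 𝔇, c * ξ U ≤ ξ' U := by
  obtain ⟨-, -, -, B, r, hr, rfl, D, hD, hdom⟩ := h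
  choose! d hdD hdU using fun b (hb : b ∈ B) => (hD b hb).exists_mem_imp_mem hU
  have hshrink : ∀ b ∈ B, c * r b < r b := fun b hb => by
    simpa using ENNReal.mul_lt_mul_left (hr b hb).1.ne' (hr b hb).2 hc
  obtain ⟨ξ', hξ', hle⟩ := hdom d hdD (fun b => c * r b) hshrink
  refine ⟨ξ', hξ', ?_⟩
  calc c * simpleVal B r U = simpleVal B (fun b => c * r b) U := const_mul_simpleVal B r c U
    _ ≤ shiftVal B d (fun b => c * r b) U := simpleVal_le_shiftVal hdU _
    _ ≤ ξ' U := hle U hU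

theorem stmt_19_general {X : Type*} [TopologicalSpace X]
    (𝔇 : Set (Set X → ℝ≥0∞)) (ξ : Set X → ℝ≥0∞) (h : PConv 𝔇 ξ) :
    ∀ U : Set X, IsOpen U → ξ U ≤ ⨆ ξ' ∈ 𝔇, ξ' U := by
  intro U hU
  refine ENNReal.le_of_forall_lt_one_mul_le fun c hc => ?_
  obtain ⟨ξ', hξ', hle⟩ := h.exists_const_mul_le hU hc
  exact hle.trans (le_biSup (fun ξ' => ξ' U) hξ')

/-- For a continuous domain `X` with the Scott topology, if a directed
family `𝔇` of simple valuations satisfies `𝔇 ⇒_P ξ`, then `ξ ≤ sup 𝔇` in the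
pointwise order on valuations. -/
theorem stmt_19 {X : Type*} [PartialOrder X] [TopologicalSpace X]
    (hScott : ∀ U : Set X, IsOpen U ↔
      (IsUpperSet U ∧ ∀ D : Set X, D.Nonempty → DirectedOn (· ≤ ·) D →
        ∀ a : X, IsLUB D a → a ∈ U → (D ∩ U).Nonempty))
    (hdcpo : ∀ D : Set X, D.Nonempty → DirectedOn (· ≤ ·) D → ∃ a : X, IsLUB D a)
    (hcont : ∀ x : X, ({a : X | wayBelow a x}).Nonempty ∧
      DirectedOn (· ≤ ·) {a : X | wayBelow a x} ∧ IsLUB {a : X | wayBelow a x} x)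
    (𝔇 : Set (Set X → ℝ≥0∞)) (ξ : Set X → ℝ≥0∞) (h : PConv 𝔇 ξ) :
    ∀ U : Set X, IsOpen U → ξ U ≤ ⨆ ξ' ∈ 𝔇, ξ' U :=
  stmt_19_general 𝔇 ξ h
end
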